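/- arXiv:1307.3346 — 5 statements merged into one kernel-verified Lean document; each statement's English description precedes it below -/
import Mathlib

section
/- For every z ∈ [0, 1/2], one has sin(2πz)/(2πz) ≤ (1 - z²)/(1 + z²), where the left-hand side is interpreted as 1 at z = 0. -/
open Real

theorem sinc_double_bound (z : ℝ) (hz : z ∈ Set.Icc (0:ℝ) (1/2)) :
    (if z = 0 then 1 else Real.sin (2 * π * z) / (2 * π * z)) ≤ (1 - z ^ 2) / (1 + z ^ 2) := by
  obtain ⟨hz0, hz1⟩ := hz
  by_cases h : z = 0
  · simp [h]
  · rw [if_neg h]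
    have hzpos : 0 < z := lt_of_le_of_ne hz0 (Ne.symm h)
    have hp : 0 < 2 * π * z := by positivity
    have habs : |π * z| ≤ π := by
      rw [abs_of_nonneg (by positivity)]
      nlinarith [pi_pos]
    have hcos : Real.cos (π * z) ≤ 1 - 2 / π ^ 2 * (π * z) ^ 2 :=
      Real.cos_le_one_sub_mul_cos_sq habs
    have hcos' : Real.cos (π * z) ≤ 1 - 2 * z ^ 2 := by
      have hπ := pi_pos
      calc Real.cos (π * z) ≤ 1 - 2 / π ^ 2 * (π * z) ^ 2 := hcos
        _ = 1 - 2 * z ^ 2 := by field_simp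
    have hcosnn : 0 ≤ Real.cos (π * z) := by
      apply Real.cos_nonneg_of_mem_Icc
      constructor
      · nlinarith [pi_pos]
      · nlinarith [pi_pos]
    have hsin : Real.sin (π * z) ≤ π * z := Real.sin_le (by positivity)
    have key : Real.sin (2 * π * z) ≤ 2 * π * z * (1 - 2 * z ^ 2) := by
      have : 2 * π * z = 2 * (π * z) := by ring
      rw [this, Real.sin_two_mul]
      calc 2 * Real.sin (π * z) * Real.cos (π * z)
          ≤ 2 * (π * z) * Real.cos (π * z) := by nlinarith
        _ ≤ 2 * (π * z) * (1 - 2 * z ^ 2) := by nlinarith [pi_pos]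
        _ = 2 * (π * z) * (1 - 2 * z ^ 2) := rfl
    rw [div_le_div_iff₀ hp (by positivity)]
    nlinarith [key, pi_pos, sq_nonneg (z ^ 2), mul_pos hp hzpos, mul_nonneg hp.le (sq_nonneg (z ^ 2))]
end

section
/- For all real x and all real p ≥ 2, the series ∑_{n∈ℤ} |sinc(x - n)|^p converges and its sum is at most 1. -/
open Real

noncomputable def sinc (x : ℝ) : ℝ := if x = 0 then 1 else Real.sin (π * x) / (π * x)

/-!
The numbers `sinc (x - n)`, `n ∈ ℤ`, are, up to unimodular factors, the Fourier coefficients of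
`t ↦ exp (2πixt)` on `[0, 1]`. By Parseval, `∑ₙ sinc (x - n) ^ 2 = ∫₀¹ |exp (2πixt)|² dt = 1`.
Since `|sinc| ≤ 1`, for `p ≥ 2` every term `|sinc (x - n)| ^ p` is at most `sinc (x - n) ^ 2`.
-/

open Complex MeasureTheory

lemma sinc_eq_sinc_pi_mul (x : ℝ) : _root_.sinc x = Real.sinc (π * x) := by
  simp [_root_.sinc, Real.sinc, pi_ne_zero]

lemma abs_sinc_le_one (x : ℝ) : |_root_.sinc x| ≤ 1 := by
  rw [sinc_eq_sinc_pi_mul]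
  exact Real.abs_sinc_le_one _

lemma norm_exp_two_pi_I_mul (y t : ℝ) : ‖cexp (2 * π * I * y * t)‖ = 1 := by
  rw [show 2 * π * I * y * t = ((2 * π * y * t : ℝ) : ℂ) * I by push_cast; ring,
    norm_exp_ofReal_mul_I]

lemma norm_integral_exp_two_pi_I_mul (y : ℝ) :
    ‖∫ t in (0 : ℝ)..1, cexp (2 * π * I * y * t)‖ = |_root_.sinc y| := by
  rcases eq_or_ne y 0 with rfl | hy
  · simp [_root_.sinc]
  have hc : 2 * π * I * y ≠ 0 := by simp [hy, pi_ne_zero]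
  rw [integral_exp_mul_complex hc, _root_.sinc, if_neg hy]
  simp only [ofReal_one, mul_one, ofReal_zero, mul_zero, Complex.exp_zero]
  rw [norm_div, show 2 * π * I * y = I * ((2 * π * y : ℝ) : ℂ) by push_cast; ring,
    norm_exp_I_mul_ofReal_sub_one]
  simp only [norm_mul, norm_real, norm_I, Real.norm_eq_abs, abs_div, abs_mul, abs_two,
    abs_of_pos pi_pos]
  field_simp

lemma fourierCoeffOn_exp_two_pi_I_mul (x : ℝ) (n : ℤ) :
    fourierCoeffOn zero_lt_one (fun t : ℝ => cexp (2 * π * I * x * t)) n =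
      ∫ t in (0 : ℝ)..1, cexp (2 * π * I * (x - n : ℝ) * t) := by
  rw [fourierCoeffOn_eq_integral _ _ zero_lt_one]
  simp only [fourier_coe_apply, smul_eq_mul, ← Complex.exp_add]
  simp only [sub_zero, div_one, one_smul, ofReal_one]
  congr 1 with t
  congr 1
  push_cast
  ring

theorem hasSum_sinc_sq (x : ℝ) : HasSum (fun n : ℤ => _root_.sinc (x - n) ^ 2) 1 := by
  have hL2 : MemLp (fun t : ℝ => cexp (2 * π * I * x * t)) 2 (volume.restrict (Set.Ioc 0 1)) :=
    MemLp.of_bound (by fun_prop) 1 (.of_forall fun t => (norm_exp_two_pi_I_mul x t).le)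
  convert hasSum_sq_fourierCoeffOn zero_lt_one hL2 using 1
  · ext n
    rw [fourierCoeffOn_exp_two_pi_I_mul, norm_integral_exp_two_pi_I_mul, sq_abs]
  · simp [norm_exp_two_pi_I_mul]

lemma abs_rpow_le_sq_of_abs_le_one {a p : ℝ} (ha : |a| ≤ 1) (hp : 2 ≤ p) : |a| ^ p ≤ a ^ 2 :=
  calc |a| ^ p ≤ |a| ^ (2 : ℝ) := rpow_le_rpow_of_exponent_ge' (abs_nonneg a) ha zero_le_two hp
    _ = a ^ 2 := by rw [rpow_two, sq_abs]

theorem sinc_pow_sum_le_one (x p : ℝ) (hp : 2 ≤ p) :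
    Summable (fun n : ℤ => |_root_.sinc (x - n)| ^ p) ∧
      (∑' n : ℤ, |_root_.sinc (x - n)| ^ p) ≤ 1 := by
  have hsq := hasSum_sinc_sq x
  have hle (n : ℤ) : |_root_.sinc (x - n)| ^ p ≤ _root_.sinc (x - n) ^ 2 :=
    abs_rpow_le_sq_of_abs_le_one (abs_sinc_le_one _) hp
  have hs : Summable fun n : ℤ => |_root_.sinc (x - n)| ^ p :=
    hsq.summable.of_nonneg_of_le (fun _ => by positivity) hle
  exact ⟨hs, (hs.tsum_le_tsum hle hsq.summable).trans hsq.tsum_eq.le⟩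
end

section
/- For every integer k ≥ 2, the equation cot(πx) = −1/(π(k − x)) has a unique solution x in the open interval (1/2, 1). -/
/-!
Multiplying the equation by `π (k - x) sin (π x)`, which is positive on `(1/2, 1)`, turns it into
`g x = 0` for `g x = π (k - x) cos (π x) + sin (π x)`. Since `g' x = -π² (k - x) sin (π x) < 0`,
`g` is strictly decreasing on `[1/2, 1]`, and it goes from `g (1/2) = 1` to `g 1 = -π (k - 1) < 0`;
the intermediate value theorem and injectivity give exactly one zero.
-/

open Real Set

theorem existsUnique_mem_Ioo_eq_zero_of_strictAntiOn {f : ℝ → ℝ} {a b : ℝ} (hab : a ≤ b)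
    (hf : ContinuousOn f (Icc a b)) (hanti : StrictAntiOn f (Icc a b))
    (ha : 0 < f a) (hb : f b < 0) : ∃! x, x ∈ Ioo a b ∧ f x = 0 := by
  obtain ⟨x, hx, hfx⟩ := intermediate_value_Ioo' hab hf ⟨hb, ha⟩
  refine ⟨x, ⟨hx, hfx⟩, fun y ⟨hy, hfy⟩ => ?_⟩
  exact hanti.injOn (Ioo_subset_Icc_self hy) (Ioo_subset_Icc_self hx) (hfy.trans hfx.symm)

noncomputable def cotEqCleared (a x : ℝ) : ℝ := π * (a - x) * cos (π * x) + sin (π * x)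

theorem cot_eq_iff_cotEqCleared_eq_zero {a x : ℝ} (hs : sin (π * x) ≠ 0) (hax : a - x ≠ 0) :
    cos (π * x) / sin (π * x) = -(1 / (π * (a - x))) ↔ cotEqCleared a x = 0 := by
  have hp : π * (a - x) ≠ 0 := mul_ne_zero pi_ne_zero hax
  rw [cotEqCleared, div_eq_iff hs, ← sub_eq_zero]
  constructor <;> intro h
  · field_simp at h
    linarith
  · field_simp
    linarith

theorem hasDerivAt_cotEqCleared (a x : ℝ) :
    HasDerivAt (cotEqCleared a) (-(π ^ 2) * (a - x) * sin (π * x)) x := by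
  have hlin : HasDerivAt (fun x : ℝ => π * x) π x := by
    simpa using (hasDerivAt_id x).const_mul π
  have hfac : HasDerivAt (fun x : ℝ => π * (a - x)) (-π) x := by
    simpa using ((hasDerivAt_id x).const_sub a).const_mul π
  have := (hfac.mul ((hasDerivAt_cos _).comp x hlin)).add ((hasDerivAt_sin _).comp x hlin)
  exact this.congr_deriv (by simp only [Function.comp_apply]; ring)

theorem continuous_cotEqCleared (a : ℝ) : Continuous (cotEqCleared a) := by
  unfold cotEqCleared; fun_prop

theorem sin_pi_mul_pos {x : ℝ} (hx : x ∈ Ioo 0 1) : 0 < sin (π * x) :=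
  sin_pos_of_pos_of_lt_pi (mul_pos pi_pos hx.1) (by nlinarith [pi_pos, hx.2])

theorem strictAntiOn_cotEqCleared {a : ℝ} (ha : 1 ≤ a) :
    StrictAntiOn (cotEqCleared a) (Icc 0 1) := by
  refine strictAntiOn_of_deriv_neg (convex_Icc 0 1) (continuous_cotEqCleared a).continuousOn
    fun x hx => ?_
  rw [interior_Icc] at hx
  rw [(hasDerivAt_cotEqCleared a x).deriv, neg_mul, neg_mul, neg_lt_zero]
  have : 0 < a - x := by linarith [hx.2]
  exact mul_pos (mul_pos (by positivity) this) (sin_pi_mul_pos hx)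

theorem cotEqCleared_one_half (a : ℝ) : cotEqCleared a (1 / 2) = 1 := by
  rw [cotEqCleared, mul_one_div, cos_pi_div_two, sin_pi_div_two]
  ring

theorem cotEqCleared_one (a : ℝ) : cotEqCleared a 1 = -(π * (a - 1)) := by
  simp [cotEqCleared]

theorem existsUnique_cot_eq {a : ℝ} (ha : 1 < a) :
    ∃! x : ℝ, x ∈ Ioo (1 / 2 : ℝ) 1 ∧ cos (π * x) / sin (π * x) = -(1 / (π * (a - x))) := by
  have hanti : StrictAntiOn (cotEqCleared a) (Icc (1 / 2) 1) :=
    (strictAntiOn_cotEqCleared ha.le).mono (Icc_subset_Icc (by norm_num) le_rfl)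
  have hzero := existsUnique_mem_Ioo_eq_zero_of_strictAntiOn (by norm_num)
    (continuous_cotEqCleared a).continuousOn hanti (by rw [cotEqCleared_one_half]; exact one_pos)
    (by rw [cotEqCleared_one, neg_lt_zero]; exact mul_pos pi_pos (by linarith))
  refine existsUnique_congr (fun x => and_congr_right fun hx => ?_) |>.mpr hzero
  exact cot_eq_iff_cotEqCleared_eq_zero (sin_pi_mul_pos ⟨by linarith [hx.1], hx.2⟩).ne'
    (by linarith [hx.2])

theorem cot_eq_unique_solution (k : ℕ) (hk : 2 ≤ k) :
    ∃! x : ℝ, x ∈ Set.Ioo (1/2 : ℝ) 1 ∧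
      Real.cos (π * x) / Real.sin (π * x) = -(1 / (π * ((k : ℝ) - x))) :=
  existsUnique_cot_eq (by exact_mod_cast hk)
end

section
/- Let a > 0, p ≥ 1 real. The function L(z) := ((a+z)^{p+1} − (a−z)^{p+1}) / (z((a+z)^p + (a−z)^p)) is (weakly) decreasing in z on the interval (0, min(a, 1/2)), and L(z) → p + 1 as z → 0⁺. -/
/-!
Put `a ± z = exp (m ± t)`, so that `t = artanh (z / a)` increases from `0` with `z`. Then
`L z = sinh ((p + 1) t) / (sinh t * cosh (p t)) = 1 + tanh (p t) / tanh t`, whose `t`-derivative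
has the sign of `p sinh (2t) - sinh (2pt)`. That is `≤ 0` for `p ≥ 1`, since
`u ↦ sinh (p u) - p sinh u` has derivative `p (cosh (p u) - cosh u) ≥ 0` and vanishes at `0`.
At `t = 0⁺` the quotient tends to `(p + 1) / (1 * 1)`.
-/

open Real Filter Set Topology

theorem Real.mul_sinh_le_sinh_mul {p u : ℝ} (hp : 1 ≤ p) (hu : 0 ≤ u) :
    p * sinh u ≤ sinh (p * u) := by
  have hderiv (x : ℝ) : HasDerivAt (fun u ↦ sinh (p * u) - p * sinh u)
      (p * (cosh (p * x) - cosh x)) x :=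
    (((hasDerivAt_id' x).const_mul p).sinh.sub ((hasDerivAt_sinh x).const_mul p)).congr_deriv
      (by ring)
  have hcosh (x : ℝ) : cosh x ≤ cosh (p * x) := by
    rw [cosh_le_cosh, abs_mul, abs_of_pos (by linarith : 0 < p)]
    nlinarith [abs_nonneg x]
  have hmono := monotone_of_hasDerivAt_nonneg hderiv fun x ↦
    mul_nonneg (by linarith) (sub_nonneg.2 (hcosh x))
  simpa using hmono hu

noncomputable def hypRatio (p t : ℝ) : ℝ := sinh ((p + 1) * t) / (sinh t * cosh (p * t))

theorem hasDerivAt_hypRatio (p : ℝ) {t : ℝ} (ht : t ≠ 0) :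
    HasDerivAt (hypRatio p)
      ((p * sinh t * cosh t - sinh (p * t) * cosh (p * t)) / (sinh t * cosh (p * t)) ^ 2) t := by
  have hden : sinh t * cosh (p * t) ≠ 0 := mul_ne_zero (sinh_ne_zero.2 ht) (cosh_pos _).ne'
  refine (((hasDerivAt_id' t).const_mul (p + 1)).sinh.div
    ((hasDerivAt_sinh t).mul ((hasDerivAt_id' t).const_mul p).cosh) hden).congr_deriv ?_
  simp only [Pi.mul_apply]
  rw [add_mul, one_mul, sinh_add, cosh_add]
  field_simp
  linear_combination
    p * sinh t * cosh t * cosh_sq (p * t) - sinh (p * t) * cosh (p * t) * cosh_sq t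

theorem antitoneOn_hypRatio {p : ℝ} (hp : 1 ≤ p) : AntitoneOn (hypRatio p) (Ioi 0) := by
  have hderiv (t : ℝ) (ht : t ∈ Ioi 0) := hasDerivAt_hypRatio p (ne_of_gt ht)
  refine antitoneOn_of_hasDerivWithinAt_nonpos (convex_Ioi 0)
    (fun t ht ↦ (hderiv t ht).continuousAt.continuousWithinAt)
    (fun t ht ↦ (hderiv t (interior_subset ht)).hasDerivWithinAt) fun t ht ↦ ?_
  rw [interior_Ioi] at ht
  refine div_nonpos_of_nonpos_of_nonneg ?_ (sq_nonneg _)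
  have hsinh := mul_sinh_le_sinh_mul hp (by linarith [ht.out] : 0 ≤ 2 * t)
  rw [mul_left_comm, sinh_two_mul, sinh_two_mul] at hsinh
  linarith

theorem tendsto_hypRatio_zero (p : ℝ) : Tendsto (hypRatio p) (𝓝[>] 0) (𝓝 (p + 1)) := by
  have hslope (q : ℝ) : Tendsto (fun t ↦ t⁻¹ * sinh (q * t)) (𝓝[>] 0) (𝓝 q) := by
    simpa using ((hasDerivAt_id' (0:ℝ)).const_mul q).sinh.tendsto_slope_zero_right
  have hcosh : Tendsto (fun t ↦ cosh (p * t)) (𝓝[>] 0) (𝓝 1) := by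
    have hcont : Continuous fun t ↦ cosh (p * t) := by fun_prop
    simpa using tendsto_nhdsWithin_of_tendsto_nhds (hcont.tendsto 0)
  have hquot := (hslope (p + 1)).div ((hslope 1).mul hcosh) (by norm_num)
  rw [one_mul, div_one] at hquot
  refine hquot.congr' (eventually_nhdsWithin_of_forall fun t (ht : 0 < t) ↦ ?_)
  simp only [Pi.div_apply, hypRatio, one_mul]
  rw [mul_assoc, mul_div_mul_left _ _ (inv_ne_zero ht.ne')]

theorem rpow_sub_rpow_eq_sinh {u v : ℝ} (hu : 0 < u) (hv : 0 < v) (q : ℝ) :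
    u ^ q - v ^ q = 2 * exp (q * ((log u + log v) / 2)) * sinh (q * ((log u - log v) / 2)) := by
  rw [rpow_def_of_pos hu, rpow_def_of_pos hv, sinh_eq,
    show log u * q = q * ((log u + log v) / 2) + q * ((log u - log v) / 2) by ring,
    show log v * q = q * ((log u + log v) / 2) + -(q * ((log u - log v) / 2)) by ring,
    exp_add, exp_add]
  ring

theorem rpow_add_rpow_eq_cosh {u v : ℝ} (hu : 0 < u) (hv : 0 < v) (q : ℝ) :
    u ^ q + v ^ q = 2 * exp (q * ((log u + log v) / 2)) * cosh (q * ((log u - log v) / 2)) := by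
  rw [rpow_def_of_pos hu, rpow_def_of_pos hv, cosh_eq,
    show log u * q = q * ((log u + log v) / 2) + q * ((log u - log v) / 2) by ring,
    show log v * q = q * ((log u + log v) / 2) + -(q * ((log u - log v) / 2)) by ring,
    exp_add, exp_add]
  ring

theorem rpow_quotient_eq_hypRatio (p : ℝ) {u v : ℝ} (hu : 0 < u) (hv : 0 < v) :
    (u ^ (p + 1) - v ^ (p + 1)) / ((u - v) / 2 * (u ^ p + v ^ p)) =
      hypRatio p ((log u - log v) / 2) := by
  have hsub := rpow_sub_rpow_eq_sinh hu hv 1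
  rw [rpow_one, rpow_one, one_mul, one_mul] at hsub
  rw [hsub, rpow_sub_rpow_eq_sinh hu hv, rpow_add_rpow_eq_cosh hu hv, hypRatio, add_mul, one_mul,
    exp_add]
  field_simp

theorem strictMonoOn_half_log_ratio (a : ℝ) :
    StrictMonoOn (fun z ↦ (log (a + z) - log (a - z)) / 2) (Ioo (-a) a) := by
  intro x hx y hy hxy
  have hplus := log_lt_log (by linarith [hx.1]) (by linarith : a + x < a + y)
  have hminus := log_lt_log (by linarith [hy.2]) (by linarith : a - y < a - x)
  dsimp only
  linarith

theorem half_log_ratio_pos {a z : ℝ} (hz : z ∈ Ioo 0 a) :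
    0 < (log (a + z) - log (a - z)) / 2 := by
  simpa using strictMonoOn_half_log_ratio a ⟨by linarith [hz.1, hz.2], by linarith [hz.1, hz.2]⟩
    ⟨by linarith [hz.1, hz.2], hz.2⟩ hz.1

theorem tendsto_half_log_ratio {a : ℝ} (ha : 0 < a) :
    Tendsto (fun z ↦ (log (a + z) - log (a - z)) / 2) (𝓝[>] 0) (𝓝[>] 0) := by
  have hcont : ContinuousAt (fun z ↦ (log (a + z) - log (a - z)) / 2) 0 := by
    fun_prop (disch := simp [ha.ne'])
  refine tendsto_nhdsWithin_iff.2 ⟨?_, ?_⟩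
  · simpa using tendsto_nhdsWithin_of_tendsto_nhds hcont.tendsto
  · filter_upwards [Ioo_mem_nhdsGT ha] with z hz using half_log_ratio_pos hz

theorem L_decreasing_and_limit (a p : ℝ) (ha : 0 < a) (hp : 1 ≤ p) :
    AntitoneOn (fun z : ℝ =>
        ((a + z) ^ (p + 1) - (a - z) ^ (p + 1)) / (z * ((a + z) ^ p + (a - z) ^ p)))
      (Set.Ioo 0 (min a (1/2))) ∧
    Filter.Tendsto (fun z : ℝ =>
        ((a + z) ^ (p + 1) - (a - z) ^ (p + 1)) / (z * ((a + z) ^ p + (a - z) ^ p)))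
      (nhdsWithin 0 (Set.Ioi 0)) (nhds (p + 1)) := by
  set L := fun z : ℝ ↦
    ((a + z) ^ (p + 1) - (a - z) ^ (p + 1)) / (z * ((a + z) ^ p + (a - z) ^ p))
  set t := fun z : ℝ ↦ (log (a + z) - log (a - z)) / 2
  have hL : EqOn (hypRatio p ∘ t) L (Ioo 0 a) := fun z hz ↦ by
    have := rpow_quotient_eq_hypRatio p (by linarith [hz.1] : 0 < a + z)
      (by linarith [hz.2] : 0 < a - z)
    rwa [show (a + z - (a - z)) / 2 = z by ring, eq_comm] at this
  have ht_mono : MonotoneOn t (Ioo 0 a) :=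
    (strictMonoOn_half_log_ratio a).monotoneOn.mono (Ioo_subset_Ioo_left (by linarith))
  constructor
  · exact (((antitoneOn_hypRatio hp).comp_MonotoneOn ht_mono fun _ hz ↦ half_log_ratio_pos hz).congr
      hL).mono (Ioo_subset_Ioo_right (min_le_left _ _))
  · exact ((tendsto_hypRatio_zero p).comp (tendsto_half_log_ratio ha)).congr'
      (hL.eventuallyEq_of_mem (Ioo_mem_nhdsGT ha))
end

section
/- For every natural number N ≥ 1 and every real p with 1 < p ≤ π²(N + 1/2)² − 1, and for every x ∈ ℝ, ∑_{n∈ℤ, |x−n|>N} |sinc(x − n)|^p ≤ 2(2/π)^p λ(p; N), with equality at x = 1/2, where λ(p; N) := ∑_{n=1}^∞ 1/(2(n+N) − 1)^p. -/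
open Real

/-- The incomplete Lambda function `λ(s; a) = ∑_{n=1}^∞ (2(n+a)-1)^{-s}`. -/
noncomputable def lam (s a : ℝ) : ℝ := ∑' n : ℕ, 1 / (2 * ((n : ℝ) + 1 + a) - 1) ^ s

/-!
Translating `x` by an integer does not change the tail sum, and at an integer every term
vanishes, so let `x = 1/2 + u` with `|u| < 1/2`. Then `|sin (π x)| = cos (π u)` and the nodes of
the tail pair up as `N + 1 + k` and `-(N + k)`, at distances `b ∓ u` from `x`, where
`b = N + k + 1/2`. It suffices that every pair is maximal at `u = 0`:
`cos (π u) ^ p * ((b + u) ^ (-p) + (b - u) ^ (-p)) ≤ 2 * b ^ (-p)`.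
With `u = b t` and `w = π² b² ≥ p + 1`, this follows from
`log cos θ ≤ -(θ² / 2 + θ⁴ / 12)` and from writing `(1 + t) ^ (-p) + (1 - t) ^ (-p)` as
`2 (1 - t²) ^ (-p / 2) cosh (p artanh t) ≤ 2 exp ((p + p²) (t² + 2 t⁴) / 2)`.
-/

open Set

theorem le_of_hasDerivAt_nonneg {f f' : ℝ → ℝ} {a b : ℝ} (hab : a ≤ b)
    (hf : ∀ x ∈ Icc a b, HasDerivAt f (f' x) x) (hf' : ∀ x ∈ Ioo a b, 0 ≤ f' x) :
    f a ≤ f b := by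
  refine monotoneOn_of_hasDerivWithinAt_nonneg (f' := f') (convex_Icc a b)
    (fun x hx => (hf x hx).continuousAt.continuousWithinAt) (fun x hx => ?_) (fun x hx => ?_)
    (left_mem_Icc.2 hab) (right_mem_Icc.2 hab) hab
  all_goals rw [interior_Icc] at hx
  · rw [interior_Icc]
    exact (hf x (Ioo_subset_Icc_self hx)).hasDerivWithinAt
  · exact hf' x hx

namespace Real

theorem mul_cos_le_sin {θ : ℝ} (h0 : 0 ≤ θ) (h1 : θ < π / 2) : θ * cos θ ≤ sin θ := by
  have hcos : 0 < cos θ := cos_pos_of_mem_Ioo ⟨by linarith [pi_pos], h1⟩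
  have := le_tan h0 h1
  rwa [tan_eq_sin_div_cos, le_div_iff₀ hcos] at this

theorem add_cube_div_three_mul_cos_le_sin {θ : ℝ} (h0 : 0 ≤ θ) (h1 : θ ≤ π / 2) :
    (θ + θ ^ 3 / 3) * cos θ ≤ sin θ := by
  have hderiv (x : ℝ) : HasDerivAt (fun x => sin x - (x + x ^ 3 / 3) * cos x)
      (x * (sin x - x * cos x) + x ^ 3 / 3 * sin x) x := by
    have := (hasDerivAt_sin x).fun_sub
      (((hasDerivAt_id' x).fun_add ((hasDerivAt_pow 3 x).div_const 3)).fun_mul (hasDerivAt_cos x))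
    exact this.congr_deriv (by push_cast; ring)
  have := le_of_hasDerivAt_nonneg h0 (fun x _ => hderiv x) fun x hx => by
    have hx0 := hx.1.le
    have hsin : 0 ≤ sin x := sin_nonneg_of_nonneg_of_le_pi hx0 (by linarith [hx.2, pi_pos])
    have : 0 ≤ sin x - x * cos x := sub_nonneg.2 (mul_cos_le_sin hx0 (hx.2.trans_le h1))
    positivity
  simpa using this

/-- That is, `log (cos θ)` is at most the first two terms `-(θ² / 2 + θ⁴ / 12)` of its Taylor
series. -/
theorem cos_le_exp_neg {θ : ℝ} (h0 : 0 ≤ θ) (h1 : θ ≤ π / 2) :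
    cos θ ≤ exp (-(θ ^ 2 / 2 + θ ^ 4 / 12)) := by
  have hderiv (x : ℝ) : HasDerivAt (fun x => -(cos x * exp (x ^ 2 / 2 + x ^ 4 / 12)))
      ((sin x - (x + x ^ 3 / 3) * cos x) * exp (x ^ 2 / 2 + x ^ 4 / 12)) x := by
    have hq : HasDerivAt (fun x : ℝ => x ^ 2 / 2 + x ^ 4 / 12) (x + x ^ 3 / 3) x :=
      (((hasDerivAt_pow 2 x).div_const 2).fun_add
        ((hasDerivAt_pow 4 x).div_const 12)).congr_deriv (by push_cast; ring)
    exact ((hasDerivAt_cos x).fun_mul hq.exp).fun_neg.congr_deriv (by ring)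
  have := le_of_hasDerivAt_nonneg h0 (fun x _ => hderiv x) fun x hx =>
    mul_nonneg (sub_nonneg.2 (add_cube_div_three_mul_cos_le_sin hx.1.le (hx.2.le.trans h1)))
      (exp_pos _).le
  rw [exp_neg, ← one_div, le_div_iff₀ (exp_pos _)]
  simpa using this

theorem neg_log_one_sub_le {s : ℝ} (hs : s ≤ 1 / 2) : -log (1 - s) ≤ s + 2 * s ^ 2 := by
  have hpos : 0 < 1 - s := by linarith
  have := one_sub_inv_le_log_of_pos hpos
  have : (1 - s)⁻¹ ≤ 1 + s + 2 * s ^ 2 := by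
    rw [inv_le_iff_one_le_mul₀ hpos]
    nlinarith [mul_nonneg (sq_nonneg s) (by linarith : (0 : ℝ) ≤ 1 - 2 * s)]
  linarith

theorem log_one_add_sub_log_one_sub_le {t : ℝ} (h0 : 0 ≤ t) (h1 : t ≤ 1 / 2) :
    log (1 + t) - log (1 - t) ≤ 2 * t + t ^ 3 := by
  have hderiv : ∀ x ∈ Icc 0 t, HasDerivAt (fun x => 2 * x + x ^ 3 - (log (1 + x) - log (1 - x)))
      (2 + 3 * x ^ 2 - (1 / (1 + x) - -1 / (1 - x))) x := fun x hx => by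
    have hplus : 1 + x ≠ 0 := by linarith [hx.1]
    have hminus : 1 - x ≠ 0 := by linarith [hx.2]
    exact ((((hasDerivAt_id' x).const_mul 2).fun_add (hasDerivAt_pow 3 x)).fun_sub
      ((((hasDerivAt_id' x).const_add 1).log hplus).fun_sub
        (((hasDerivAt_id' x).const_sub 1).log hminus))).congr_deriv (by push_cast; ring)
  have := le_of_hasDerivAt_nonneg h0 hderiv fun x hx => by
    have hplus : 0 < 1 + x := by linarith [hx.1]
    have hminus : 0 < 1 - x := by linarith [hx.2]
    rw [sub_nonneg, neg_div, sub_neg_eq_add, div_add_div _ _ hplus.ne' hminus.ne',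
      div_le_iff₀ (mul_pos hplus hminus)]
    nlinarith [mul_nonneg (sq_nonneg x) (by nlinarith [hx.2, hx.1] : (0 : ℝ) ≤ 1 - 3 * x ^ 2)]
  simpa using this

theorem exp_add_exp (a b : ℝ) : exp a + exp b = 2 * exp ((a + b) / 2) * cosh ((a - b) / 2) := by
  set m := (a + b) / 2
  set d := (a - b) / 2
  rw [show a = m + d by ring, show b = m + -d by ring, exp_add, exp_add, cosh_eq]
  ring

theorem one_add_rpow_neg_add_one_sub_rpow_neg_le {t p : ℝ} (ht0 : 0 ≤ t) (ht : t ≤ 1 / 2)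
    (hp : 0 ≤ p) :
    (1 + t) ^ (-p) + (1 - t) ^ (-p) ≤ 2 * exp ((p + p ^ 2) * (t ^ 2 + 2 * t ^ 4) / 2) := by
  have hplus : 0 < 1 + t := by linarith
  have hminus : 0 < 1 - t := by linarith
  have hsum : -(log (1 + t) + log (1 - t)) ≤ t ^ 2 + 2 * t ^ 4 := by
    rw [← log_mul hplus.ne' hminus.ne', show (1 + t) * (1 - t) = 1 - t ^ 2 by ring]
    have := neg_log_one_sub_le (s := t ^ 2) (by nlinarith)
    linarith
  have hdiff : (log (1 + t) - log (1 - t)) ^ 2 ≤ 4 * (t ^ 2 + 2 * t ^ 4) := by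
    have h0 : 0 ≤ log (1 + t) - log (1 - t) := sub_nonneg.2 (log_le_log hminus (by linarith))
    have h1 := pow_le_pow_left₀ h0 (log_one_add_sub_log_one_sub_le ht0 ht) 2
    have : t ^ 2 ≤ 4 := by nlinarith
    have : t ^ 6 ≤ 4 * t ^ 4 := by nlinarith [mul_le_mul_of_nonneg_left this (pow_nonneg ht0 4)]
    nlinarith
  rw [rpow_def_of_pos hplus, rpow_def_of_pos hminus, exp_add_exp]
  calc 2 * exp ((log (1 + t) * -p + log (1 - t) * -p) / 2)
        * cosh ((log (1 + t) * -p - log (1 - t) * -p) / 2)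
      ≤ 2 * exp ((log (1 + t) * -p + log (1 - t) * -p) / 2)
        * exp (((log (1 + t) * -p - log (1 - t) * -p) / 2) ^ 2 / 2) := by
        gcongr
        exact cosh_le_exp_half_sq _
    _ = 2 * exp ((log (1 + t) * -p + log (1 - t) * -p) / 2
        + ((log (1 + t) * -p - log (1 - t) * -p) / 2) ^ 2 / 2) := by
        rw [mul_assoc, ← exp_add]
    _ ≤ 2 * exp ((p + p ^ 2) * (t ^ 2 + 2 * t ^ 4) / 2) := by
        gcongr
        nlinarith [mul_le_mul_of_nonneg_left hsum hp, mul_le_mul_of_nonneg_left hdiff (sq_nonneg p)]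

theorem pair_exponent_nonpos {p w t : ℝ} (hp : 0 ≤ p) (hpw : p + 1 ≤ w) (hw : 12 ≤ w) :
    -p * (w * t ^ 2 / 2 + w ^ 2 * t ^ 4 / 12) + (p + p ^ 2) * (t ^ 2 + 2 * t ^ 4) / 2 ≤ 0 := by
  -- the left side is `-(p t² / 2) (w - 1 - p) - (p t⁴ / 12) (w² - 12 - 12 p)`
  have h2 : 0 ≤ p * t ^ 2 * (w - 1 - p) := by
    have : 0 ≤ w - 1 - p := by linarith
    positivity
  have h4 : 0 ≤ p * t ^ 4 * (w ^ 2 - 12 - 12 * p) := by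
    have : 0 ≤ w ^ 2 - 12 - 12 * p := by nlinarith
    positivity
  nlinarith

theorem cos_rpow_mul_rpow_neg_add_le {b u p : ℝ} (hb : 3 / 2 ≤ b) (hu0 : 0 ≤ u)
    (hu : u ≤ 1 / 2) (hp : 1 ≤ p) (hpb : p + 1 ≤ π ^ 2 * b ^ 2) :
    cos (π * u) ^ p * ((b + u) ^ (-p) + (b - u) ^ (-p)) ≤ 2 * b ^ (-p) := by
  have hb0 : 0 < b := by linarith
  obtain ⟨t, rfl⟩ : ∃ t, u = b * t := ⟨u / b, by field_simp⟩
  have ht0 : 0 ≤ t := nonneg_of_mul_nonneg_right hu0 hb0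
  have ht : t ≤ 1 / 2 := by nlinarith
  have hsplit : (b + b * t) ^ (-p) + (b - b * t) ^ (-p)
      = b ^ (-p) * ((1 + t) ^ (-p) + (1 - t) ^ (-p)) := by
    rw [show b + b * t = b * (1 + t) by ring, show b - b * t = b * (1 - t) by ring,
      mul_rpow hb0.le (by linarith), mul_rpow hb0.le (by linarith), mul_add]
  set w := π ^ 2 * b ^ 2 with hw_def
  have hθ0 : 0 ≤ π * (b * t) := mul_nonneg pi_pos.le hu0
  have hθ1 : π * (b * t) ≤ π / 2 := by nlinarith [pi_pos]
  have hcos : cos (π * (b * t)) ^ p ≤ exp (-p * (w * t ^ 2 / 2 + w ^ 2 * t ^ 4 / 12)) := by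
    calc cos (π * (b * t)) ^ p
        ≤ exp (-((π * (b * t)) ^ 2 / 2 + (π * (b * t)) ^ 4 / 12)) ^ p :=
          rpow_le_rpow (cos_nonneg_of_mem_Icc ⟨by linarith [pi_pos], hθ1⟩)
            (cos_le_exp_neg hθ0 hθ1) (by linarith)
      _ = exp (-p * (w * t ^ 2 / 2 + w ^ 2 * t ^ 4 / 12)) := by
          rw [← exp_mul, hw_def]
          ring_nf
  have hpair := one_add_rpow_neg_add_one_sub_rpow_neg_le ht0 ht (by linarith : 0 ≤ p)
  have hw : 12 ≤ w := by
    have : 9 ≤ π ^ 2 := by nlinarith [pi_gt_three]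
    have : 9 / 4 ≤ b ^ 2 := by nlinarith
    nlinarith
  have hexp := pair_exponent_nonpos (by linarith) hpb hw (t := t)
  calc cos (π * (b * t)) ^ p * ((b + b * t) ^ (-p) + (b - b * t) ^ (-p))
      = b ^ (-p) * (cos (π * (b * t)) ^ p * ((1 + t) ^ (-p) + (1 - t) ^ (-p))) := by
        rw [hsplit]
        ring
    _ ≤ b ^ (-p) * (exp (-p * (w * t ^ 2 / 2 + w ^ 2 * t ^ 4 / 12))
          * (2 * exp ((p + p ^ 2) * (t ^ 2 + 2 * t ^ 4) / 2))) := by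
        gcongr
        exact add_nonneg (rpow_nonneg (by linarith) _) (rpow_nonneg (by linarith) _)
    _ = 2 * b ^ (-p) * exp (-p * (w * t ^ 2 / 2 + w ^ 2 * t ^ 4 / 12)
          + (p + p ^ 2) * (t ^ 2 + 2 * t ^ 4) / 2) := by
        rw [exp_add]
        ring
    _ ≤ 2 * b ^ (-p) := mul_le_of_le_one_right (by positivity) (exp_le_one_iff.2 hexp)

end Real

theorem Real.summable_nat_add_rpow_neg {a p : ℝ} (hp : 1 < p) (ha : 0 < a) :
    Summable fun k : ℕ => ((k : ℝ) + a) ^ (-p) := by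
  refine ((summable_one_div_nat_add_rpow a p).2 hp).congr fun k => ?_
  have : 0 < (k : ℝ) + a := by positivity
  rw [abs_of_pos this, rpow_neg this.le, one_div]

theorem abs_sin_pi_mul_half_add {u : ℝ} (hu : |u| ≤ 1 / 2) :
    |sin (π * (1 / 2 + u))| = cos (π * u) := by
  obtain ⟨hu₁, hu₂⟩ := abs_le.1 hu
  rw [show π * (1 / 2 + u) = π * u + π / 2 by ring, sin_add_pi_div_two,
    abs_of_nonneg (cos_nonneg_of_mem_Icc ⟨by nlinarith [pi_pos], by nlinarith [pi_pos]⟩)]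

theorem abs_sinc_sub_intCast (x : ℝ) (n : ℤ) (h : x - n ≠ 0) :
    |_root_.sinc (x - n)| = |sin (π * x)| / (π * |x - n|) := by
  rw [_root_.sinc, if_neg h, abs_div, abs_mul, abs_of_pos pi_pos,
    show π * (x - n) = π * x - n * π by ring, sin_sub_int_mul_pi, abs_mul, abs_neg_one_zpow,
    one_mul]

noncomputable def sincTail (N : ℕ) (p x : ℝ) (n : ℤ) : ℝ :=
  if (N : ℝ) < |x - n| then |_root_.sinc (x - n)| ^ p else 0

section sincTail

variable {N : ℕ} {p : ℝ}

theorem sincTail_of_lt {x : ℝ} {n : ℤ} (h : (N : ℝ) < |x - n|) :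
    sincTail N p x n = |sin (π * x)| ^ p * |x - n| ^ (-p) / π ^ p := by
  have hpos : 0 < |x - n| := (Nat.cast_nonneg N).trans_lt h
  rw [sincTail, if_pos h, abs_sinc_sub_intCast x n (abs_pos.1 hpos),
    div_rpow (abs_nonneg _) (by positivity), mul_rpow pi_pos.le hpos.le, rpow_neg hpos.le]
  ring

theorem sincTail_zero_left (hp : p ≠ 0) (n : ℤ) : sincTail N p 0 n = 0 := by
  by_cases h : (N : ℝ) < |(0 : ℝ) - n|
  · rw [sincTail_of_lt h, mul_zero, sin_zero, abs_zero, zero_rpow hp, zero_mul, zero_div]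
  · rw [sincTail, if_neg h]

theorem tsum_sincTail_add_intCast (x : ℝ) (m : ℤ) :
    ∑' n, sincTail N p (x + m) n = ∑' n, sincTail N p x n := by
  rw [← (Equiv.addRight m).tsum_eq]
  simp only [Equiv.coe_addRight, sincTail, Int.cast_add, add_sub_add_right_eq_sub]

end sincTail

/-- The contribution of the two nodes `N + 1 + k` and `-(N + k)` to the tail sum at `1/2 + u`;
they lie at distance `N + k + 1/2 ∓ u` from it. -/
noncomputable def sincPair (N : ℕ) (p u : ℝ) (k : ℕ) : ℝ :=
  cos (π * u) ^ p * (((N : ℝ) + k + 1 / 2 + u) ^ (-p) + ((N : ℝ) + k + 1 / 2 - u) ^ (-p))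
    / π ^ p

section sincPair

variable {N : ℕ} {p u : ℝ}

theorem sincPair_neg : sincPair N p (-u) = sincPair N p u := by
  funext k
  rw [sincPair, sincPair, mul_neg, cos_neg, sub_neg_eq_add, ← sub_eq_add_neg,
    add_comm (((N : ℝ) + k + 1 / 2 - u) ^ (-p))]

theorem sincPair_le_sincPair_zero (hN : 1 ≤ N) (hp : 1 ≤ p)
    (hpN : p ≤ π ^ 2 * ((N : ℝ) + 1 / 2) ^ 2 - 1) (hu : |u| ≤ 1 / 2) (k : ℕ) :
    sincPair N p u k ≤ sincPair N p 0 k := by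
  have hN' : (1 : ℝ) ≤ N := by exact_mod_cast hN
  have hk : (0 : ℝ) ≤ k := k.cast_nonneg
  have key (v : ℝ) (hv0 : 0 ≤ v) (hv : v ≤ 1 / 2) :
      sincPair N p v k ≤ sincPair N p 0 k := by
    simp only [sincPair, mul_zero, cos_zero, one_rpow, one_mul, add_zero, sub_zero]
    have hb : p + 1 ≤ π ^ 2 * ((N : ℝ) + k + 1 / 2) ^ 2 := by
      nlinarith [pow_le_pow_left₀ (by positivity : (0 : ℝ) ≤ N + 1 / 2)
        (by linarith : (N : ℝ) + 1 / 2 ≤ N + k + 1 / 2) 2, sq_nonneg π]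
    gcongr
    exact (cos_rpow_mul_rpow_neg_add_le (by linarith) hv0 hv hp hb).trans_eq (two_mul _)
  rcases abs_cases u with ⟨h, -⟩ | ⟨h, -⟩
  · exact h ▸ key |u| (abs_nonneg u) hu
  · rw [← sincPair_neg]
    exact h ▸ key |u| (abs_nonneg u) hu

theorem summable_rpow_neg_add_half {a : ℝ} (hp : 1 < p) (ha : -(1 / 2) < a) :
    Summable fun k : ℕ => ((N : ℝ) + k + 1 / 2 + a) ^ (-p) := by
  have hpos : (0 : ℝ) < N + 1 / 2 + a := by linarith [N.cast_nonneg (α := ℝ)]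
  exact (summable_nat_add_rpow_neg hp hpos).congr fun k => by congr 1; ring

theorem summable_rpow_neg_sub_half {a : ℝ} (hp : 1 < p) (ha : a < 1 / 2) :
    Summable fun k : ℕ => ((N : ℝ) + k + 1 / 2 - a) ^ (-p) := by
  simpa only [← sub_eq_add_neg] using
    summable_rpow_neg_add_half (N := N) (a := -a) hp (by linarith)

theorem summable_sincPair (hp : 1 < p) (hu : |u| < 1 / 2) : Summable (sincPair N p u) :=
  (((summable_rpow_neg_add_half hp (abs_lt.1 hu).1).add
    (summable_rpow_neg_sub_half hp (abs_lt.1 hu).2)).mul_left _).div_const _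

theorem sincTail_half_add_eq_zero (hu : |u| < 1 / 2) {n : ℤ} (h1 : 1 - (N : ℤ) ≤ n)
    (h2 : n ≤ N) : sincTail N p (1 / 2 + u) n = 0 := by
  have h1' : (1 : ℝ) - N ≤ n := by exact_mod_cast h1
  have h2' : (n : ℝ) ≤ N := by exact_mod_cast h2
  obtain ⟨hu₁, hu₂⟩ := abs_lt.1 hu
  exact if_neg (not_lt.2 (abs_le.2 ⟨by linarith, by linarith⟩))

theorem hasSum_sincTail (hp : 1 < p) (hu : |u| < 1 / 2) :
    HasSum (sincTail N p (1 / 2 + u)) (∑' k, sincPair N p u k) := by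
  obtain ⟨hu₁, hu₂⟩ := abs_lt.1 hu
  have hk (k : ℕ) : (0 : ℝ) ≤ k := k.cast_nonneg
  have hsin := abs_sin_pi_mul_half_add hu.le
  have hleft (k : ℕ) : sincTail N p (1 / 2 + u) (-((N : ℤ) + k))
      = cos (π * u) ^ p * ((N : ℝ) + k + 1 / 2 + u) ^ (-p) / π ^ p := by
    have h : |1 / 2 + u - ((-((N : ℤ) + k) : ℤ) : ℝ)| = N + k + 1 / 2 + u := by
      push_cast
      rw [abs_of_pos (by linarith [hk k, hk N])]
      ring
    rw [sincTail_of_lt (h ▸ by linarith [hk k]), h, hsin]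
  have hright (k : ℕ) : sincTail N p (1 / 2 + u) ((N : ℤ) + 1 + k)
      = cos (π * u) ^ p * ((N : ℝ) + k + 1 / 2 - u) ^ (-p) / π ^ p := by
    have h : |1 / 2 + u - (((N : ℤ) + 1 + k : ℤ) : ℝ)| = N + k + 1 / 2 - u := by
      push_cast
      rw [abs_of_neg (by linarith [hk k])]
      ring
    rw [sincTail_of_lt (h ▸ by linarith [hk k]), h, hsin]
  let g : ℕ ⊕ ℕ → ℤ := Sum.elim (fun k => -((N : ℤ) + k)) (fun k => (N : ℤ) + 1 + k)
  have hg : g.Injective :=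
    Function.Injective.sumElim (fun a b h => by simpa using h) (fun a b h => by simpa using h)
      fun a b => by omega
  have hsupp (n : ℤ) (hn : n ∉ Set.range g) : sincTail N p (1 / 2 + u) n = 0 := by
    refine sincTail_half_add_eq_zero hu ?_ ?_ <;> by_contra! h <;> apply hn
    · exact ⟨.inl (-n - N).toNat, by simp only [g, Sum.elim_inl]; omega⟩
    · exact ⟨.inr (n - N - 1).toNat, by simp only [g, Sum.elim_inr]; omega⟩
  have hplus := (((summable_rpow_neg_add_half (N := N) hp hu₁).mul_left
    (cos (π * u) ^ p)).div_const (π ^ p)).hasSum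
  have hminus := (((summable_rpow_neg_sub_half (N := N) hp hu₂).mul_left
    (cos (π * u) ^ p)).div_const (π ^ p)).hasSum
  rw [((hplus.add hminus).congr_fun (g := sincPair N p u) fun k => by
    rw [sincPair, mul_add, add_div]).tsum_eq]
  exact (hg.hasSum_iff hsupp).1 ((hplus.congr_fun hleft).sum (hminus.congr_fun hright))

end sincPair

theorem sincPair_zero (N : ℕ) (p : ℝ) (k : ℕ) :
    sincPair N p 0 k = 2 * ((N : ℝ) + k + 1 / 2) ^ (-p) / π ^ p := by
  rw [sincPair, mul_zero, cos_zero, one_rpow, add_zero, sub_zero, one_mul, two_mul]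

theorem tsum_sincPair_zero (N : ℕ) (p : ℝ) :
    ∑' k, sincPair N p 0 k = 2 * (2 / π) ^ p * lam p N := by
  rw [lam, ← tsum_mul_left]
  refine tsum_congr fun k => ?_
  have hb : (0 : ℝ) < N + k + 1 / 2 := by positivity
  rw [sincPair_zero, show 2 * ((k : ℝ) + 1 + N) - 1 = 2 * (N + k + 1 / 2) by ring,
    mul_rpow zero_le_two hb.le, div_rpow zero_le_two pi_pos.le, rpow_neg hb.le]
  field_simp

theorem sinc_tail_sum_sharp_bound (N : ℕ) (hN : 1 ≤ N) (p : ℝ) (hp1 : 1 < p)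
    (hp2 : p ≤ π ^ 2 * ((N : ℝ) + 1/2) ^ 2 - 1) :
    (∀ x : ℝ,
      (∑' n : ℤ, if (N : ℝ) < |x - (n : ℝ)| then |_root_.sinc (x - n)| ^ p else 0)
        ≤ 2 * (2 / π) ^ p * lam p N) ∧
    (∑' n : ℤ, if (N : ℝ) < |(1/2 : ℝ) - (n : ℝ)| then |_root_.sinc (1/2 - n)| ^ p else 0)
      = 2 * (2 / π) ^ p * lam p N := by
  have hpair_bound (u : ℝ) (hu : |u| < 1 / 2) :
      ∑' n, sincTail N p (1 / 2 + u) n ≤ 2 * (2 / π) ^ p * lam p N := by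
    rw [(hasSum_sincTail hp1 hu).tsum_eq, ← tsum_sincPair_zero]
    exact (summable_sincPair hp1 hu).tsum_le_tsum
      (sincPair_le_sincPair_zero hN hp1.le (by linarith) hu.le) (summable_sincPair hp1 (by simp))
  refine ⟨fun x => ?_, ?_⟩
  · change ∑' n, sincTail N p x n ≤ _
    rw [← Int.fract_add_floor x, tsum_sincTail_add_intCast]
    rcases (Int.fract_nonneg x).eq_or_lt with h | h
    · rw [← h, tsum_congr (sincTail_zero_left (by linarith)), tsum_zero, ← tsum_sincPair_zero]
      exact tsum_nonneg fun k => by rw [sincPair_zero]; positivity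
    · have hu : |Int.fract x - 1 / 2| < 1 / 2 :=
        abs_lt.2 ⟨by linarith, by linarith [Int.fract_lt_one x]⟩
      simpa only [add_sub_cancel] using hpair_bound _ hu
  · have := (hasSum_sincTail (N := N) hp1 (u := 0) (by simp)).tsum_eq
    rwa [add_zero, tsum_sincPair_zero] at this
end
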